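/- arXiv:2006.03281 — 3 statements merged into one kernel-verified Lean document; each statement's English description precedes it below -/
import Mathlib

section
/- Let G be a σ-compact locally compact group and K a compact subgroup. Suppose Φ ∈ L¹(Ω, μ) and f ∈ C(G/K) satisfies f(ẋ) → l as ẋ → ∞ (i.e., for every ε > 0 there is a compact set C ⊂ G/K with |f(ẋ) − l| < ε outside C). If ∫_Ω Φ dμ = 1, then H f(ẋ) = ∫_Ω Φ(u) f(Ȧ(u)(ẋ)) dμ(u) → l as ẋ → ∞. Conversely, if H f(ẋ) → l for all such f, then ∫_Ω Φ dμ = 1. -/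
open MeasureTheory Filter Topology

/-!
The forward direction is dominated convergence along the cocompact filter of `G ⧸ K`, which is
countably generated since `G ⧸ K` is σ-compact and locally compact: a continuous `f` with a limit
at infinity is bounded, and each `Ȧ(u)`, being a homeomorphism, sends infinity to infinity, so
`Φ u * f (Ȧ(u) ẋ) → Φ u * l` pointwise. The converse is the case `f = 1`.
-/

section Topology

variable {X Y : Type*} [TopologicalSpace X] [TopologicalSpace Y]

lemma Function.Surjective.sigmaCompactSpace {f : X → Y} (hf : Continuous f) [SigmaCompactSpace X]
    (hf' : f.Surjective) : SigmaCompactSpace Y :=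
  isSigmaCompact_univ_iff.mp (hf'.range_eq ▸ isSigmaCompact_range hf)

instance isCountablyGenerated_cocompact [SigmaCompactSpace X] [WeaklyLocallyCompactSpace X] :
    (cocompact X).IsCountablyGenerated := by
  let E := CompactExhaustion.choice X
  have hE : (cocompact X).HasBasis (fun _ : ℕ => True) (fun n => (E n)ᶜ) :=
    hasBasis_cocompact.to_hasBasis
      (fun _ hs => (E.exists_superset_of_isCompact hs).imp fun _ hn =>
        ⟨trivial, Set.compl_subset_compl.2 hn⟩)
      (fun n _ => ⟨E n, E.isCompact n, subset_rfl⟩)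
  exact hE.isCountablyGenerated

lemma Continuous.isBounded_range_of_tendsto_cocompact {E : Type*} [PseudoMetricSpace E]
    {f : X → E} {l : E} (hf : Continuous f) (hfl : Tendsto f (cocompact X) (𝓝 l)) :
    Bornology.IsBounded (Set.range f) := by
  obtain ⟨C, hC, hCf⟩ := mem_cocompact.mp (hfl (Metric.ball_mem_nhds l one_pos))
  refine ((hC.image hf).isBounded.union (Metric.isBounded_ball (x := l) (r := 1))).subset
    (Set.range_subset_iff.2 fun x => ?_)
  by_cases hx : x ∈ C
  · exact Or.inl ⟨x, hx, rfl⟩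
  · exact Or.inr (hCf hx)

end Topology

theorem tendsto_integral_mul_comp_homeomorph_cocompact {X Ω : Type*} [TopologicalSpace X]
    [MeasurableSpace X] [OpensMeasurableSpace X] [(cocompact X).IsCountablyGenerated]
    [MeasurableSpace Ω] {μ : Measure Ω} (e : Ω → X ≃ₜ X) (he : ∀ x, Measurable fun u => e u x)
    {Φ : Ω → ℝ} (hΦ : Integrable Φ μ) {f : X → ℝ} {l : ℝ} (hf : Continuous f)
    (hfl : Tendsto f (cocompact X) (𝓝 l)) :
    Tendsto (fun x => ∫ u, Φ u * f (e u x) ∂μ) (cocompact X) (𝓝 ((∫ u, Φ u ∂μ) * l)) := by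
  obtain ⟨M, hM⟩ := isBounded_iff_forall_norm_le.mp (hf.isBounded_range_of_tendsto_cocompact hfl)
  rw [← integral_mul_const]
  refine tendsto_integral_filter_of_dominated_convergence (fun u => ‖Φ u‖ * M)
    (.of_forall fun x =>
      hΦ.aestronglyMeasurable.mul (hf.measurable.comp (he x)).aestronglyMeasurable)
    (.of_forall fun x => .of_forall fun u => ?_) (hΦ.norm.mul_const M)
    (.of_forall fun u => ((hfl.comp (e u).isClosedEmbedding.tendsto_cocompact).const_mul (Φ u)))
  rw [norm_mul]
  exact mul_le_mul_of_nonneg_left (hM _ ⟨_, rfl⟩) (norm_nonneg _)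

theorem hausdorff_regular_iff_general
    {G : Type*} [Group G] [TopologicalSpace G] [IsTopologicalGroup G]
    [LocallyCompactSpace G] [SigmaCompactSpace G]
    (K : Subgroup G)
    (hnc : (Filter.cocompact (G ⧸ K)).NeBot)
    [MeasurableSpace (G ⧸ K)] [BorelSpace (G ⧸ K)]
    {Ω : Type*} [MeasurableSpace Ω] (μ : Measure Ω)
    (Adot : Ω → (G ⧸ K) ≃ₜ (G ⧸ K))
    (hAdotmeas : ∀ x : G ⧸ K, Measurable fun u => Adot u x)
    (Φ : Ω → ℝ) (hΦ : Integrable Φ μ) :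
    (∫ u, Φ u ∂μ) = 1 ↔
      ∀ (f : G ⧸ K → ℝ) (l : ℝ), Continuous f →
        Tendsto f (cocompact (G ⧸ K)) (𝓝 l) →
        Tendsto (fun x => ∫ u, Φ u * f (Adot u x) ∂μ)
          (cocompact (G ⧸ K)) (𝓝 l) := by
  have : SigmaCompactSpace (G ⧸ K) :=
    QuotientGroup.mk_surjective.sigmaCompactSpace continuous_quot_mk
  refine ⟨fun hΦ1 f l hf hfl => ?_, fun hreg => ?_⟩
  · simpa [hΦ1] using tendsto_integral_mul_comp_homeomorph_cocompact Adot hAdotmeas hΦ hf hfl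
  · have hconst := hreg (fun _ => 1) 1 continuous_const tendsto_const_nhds
    simp only [mul_one] at hconst
    exact tendsto_const_nhds_iff.mp hconst

/-- Proposition 1: over a σ-compact locally compact group `G` and
compact subgroup `K`, the Hausdorff operator `H` with integrable kernel `Φ` is
regular — i.e. maps every continuous `f` on `G/K` with `f(ẋ) → l` at infinity to
a function tending to `l` at infinity — if and only if `∫_Ω Φ dμ = 1`. -/
theorem hausdorff_regular_iff
    {G : Type*} [Group G] [TopologicalSpace G] [IsTopologicalGroup G]
    [LocallyCompactSpace G] [SigmaCompactSpace G] [T2Space G]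
    (K : Subgroup G) (hK : IsCompact (K : Set G))
    (hnc : (Filter.cocompact (G ⧸ K)).NeBot)
    [MeasurableSpace (G ⧸ K)] [BorelSpace (G ⧸ K)]
    {Ω : Type*} [MeasurableSpace Ω] (μ : Measure Ω)
    (A : Ω → G ≃ₜ G)
    (hAhom : ∀ u, ∀ x y : G, A u (x * y) = A u x * A u y)
    (hAK : ∀ u, (A u : G → G) '' (K : Set G) = (K : Set G))
    (Adot : Ω → (G ⧸ K) ≃ₜ (G ⧸ K))
    (hAdot : ∀ u (x : G), Adot u (QuotientGroup.mk x) = QuotientGroup.mk (A u x))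
    (hAdotmeas : ∀ x : G ⧸ K, Measurable fun u => Adot u x)
    (Φ : Ω → ℝ) (hΦ : Integrable Φ μ) :
    (∫ u, Φ u ∂μ) = 1 ↔
      ∀ (f : G ⧸ K → ℝ) (l : ℝ), Continuous f →
        Tendsto f (cocompact (G ⧸ K)) (𝓝 l) →
        Tendsto (fun x => ∫ u, Φ u * f (Adot u x) ∂μ)
          (cocompact (G ⧸ K)) (𝓝 l) :=
  hausdorff_regular_iff_general K hnc μ Adot hAdotmeas Φ hΦ
end

section
/- Let G be a metric locally compact group with left invariant metric ρ, K a compact subgroup, and a a (1,∞)-atom on G supported in the ball B(e, r_B). Then the averaged function a'(x) := c ∫_K a(xk) dk, with c = ν(B(e, r_B))/ν(B(e, r'_B)) and r'_B = r_B + dist(e, K) (where dist is measured via ρ), is a right-K-invariant function supported in B(e, r'_B) satisfying ‖a'‖_∞ ≤ 1/ν(B(e, r'_B)) and ∫_G a' dν = 0; i.e., a' is a right-K-invariant (1,∞)-atom. -/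
/-!
Averaging `a` over `K` from the right keeps it supported in the ball enlarged by the largest
distance from `e` to `K`, because the metric is left invariant, and keeps the sup bound because
`β` is a probability measure. Right-`K`-invariance is the left invariance of `β`, which on a
compact group follows from its right invariance by uniqueness of normalized Haar measure. The
integral vanishes by Fubini, since a right translate of `a` integrates to `Δ(k) ∫ a = 0`.
-/

open MeasureTheory Metric
open scoped ENNReal

namespace MeasureTheory.Measure

section CompactGroup

variable {K : Type*} [Group K] [TopologicalSpace K] [IsTopologicalGroup K] [CompactSpace K]
  [MeasurableSpace K] [BorelSpace K]

instance isProbabilityMeasure_haarMeasure_top :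
    IsProbabilityMeasure (haarMeasure (⊤ : TopologicalSpace.PositiveCompacts K)) :=
  ⟨by rw [← TopologicalSpace.PositiveCompacts.coe_top (α := K)]; exact haarMeasure_self⟩

theorem eq_haarMeasure_top_of_isProbabilityMeasure (μ : Measure K) [IsProbabilityMeasure μ]
    [μ.IsMulLeftInvariant] : μ = haarMeasure ⊤ := by
  have hμ := isMulInvariant_eq_smul_of_compactSpace μ (haarMeasure ⊤)
  have hfactor : haarScalarFactor μ (haarMeasure ⊤) = 1 := by
    have huniv := congrArg (fun m : Measure K => m Set.univ) hμ
    simp only [smul_apply, measure_univ, ENNReal.smul_def, smul_eq_mul, mul_one] at huniv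
    exact_mod_cast huniv.symm
  rw [hμ, hfactor, one_smul]

theorem isMulRightInvariant_of_isProbabilityMeasure (μ : Measure K) [IsProbabilityMeasure μ]
    [μ.IsMulLeftInvariant] : μ.IsMulRightInvariant := by
  refine ⟨fun g => ?_⟩
  have : IsProbabilityMeasure (map (· * g) μ) :=
    isProbabilityMeasure_map (measurable_mul_const g).aemeasurable
  rw [eq_haarMeasure_top_of_isProbabilityMeasure (map (· * g) μ),
    eq_haarMeasure_top_of_isProbabilityMeasure μ]

theorem isMulLeftInvariant_of_isProbabilityMeasure (μ : Measure K) [IsProbabilityMeasure μ]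
    [μ.IsMulRightInvariant] : μ.IsMulLeftInvariant := by
  have : IsProbabilityMeasure μ.inv := ⟨by rw [inv_apply, Set.inv_univ, measure_univ]⟩
  have := isMulRightInvariant_of_isProbabilityMeasure μ.inv
  rw [← Measure.inv_inv μ]
  infer_instance

end CompactGroup

theorem isMulRightInvariant_of_integral_comp_mul_right {K : Type*} [Group K] [MeasurableSpace K]
    [MeasurableMul K] (μ : Measure K) [IsFiniteMeasure μ]
    (h : ∀ (g : K) (f : K → ℝ), ∫ x, f (x * g) ∂μ = ∫ x, f x ∂μ) : μ.IsMulRightInvariant := by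
  refine ⟨fun g => ext fun s hs => ?_⟩
  have hpre : MeasurableSet ((· * g) ⁻¹' s) := measurable_mul_const g hs
  have hind := h g (s.indicator 1)
  rw [show (fun x => s.indicator (1 : K → ℝ) (x * g)) = ((· * g) ⁻¹' s).indicator 1 from rfl,
    integral_indicator_one hpre, integral_indicator_one hs] at hind
  rw [map_apply (measurable_mul_const g) hs]
  exact (ENNReal.toReal_eq_toReal_iff' (measure_ne_top μ _) (measure_ne_top μ _)).mp hind

theorem integral_comp_mul_right_eq_zero {G : Type*} [Group G] [TopologicalSpace G]
    [IsTopologicalGroup G] [LocallyCompactSpace G] [SecondCountableTopology G]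
    [MeasurableSpace G] [BorelSpace G] (ν : Measure G) [ν.IsHaarMeasure] {a : G → ℝ}
    (ha : ∫ x, a x ∂ν = 0) (g : G) : ∫ x, a (x * g) ∂ν = 0 := by
  calc ∫ x, a (x * g) ∂ν = ∫ x, a x ∂map (· * g) ν :=
        (integral_map_equiv (MeasurableEquiv.mulRight g) a).symm
    _ = modularCharacterFun g • ∫ x, a x ∂ν := by
        rw [map_right_mul_eq_modularCharacterFun_smul, integral_smul_nnreal_measure]
    _ = 0 := by rw [ha, smul_zero]

end MeasureTheory.Measure

open MeasureTheory.Measure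

theorem div_mul_inv_le_inv {p q : ℝ} (hq : 0 ≤ q) : p / q * p⁻¹ ≤ q⁻¹ :=
  calc p / q * p⁻¹ = q⁻¹ * (p * p⁻¹) := by ring
    _ ≤ q⁻¹ * 1 := mul_le_mul_of_nonneg_left mul_inv_le_one (inv_nonneg.2 hq)
    _ = q⁻¹ := mul_one _

section LeftInvariantMetric

variable {G : Type*} [Group G] [MetricSpace G]

theorem dist_self_mul_of_left_invariant (hinv : ∀ g x y : G, dist (g * x) (g * y) = dist x y)
    (x k : G) : dist x (x * k) = dist 1 k := by
  simpa using hinv x 1 k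

theorem mem_ball_of_mul_mem_ball (hinv : ∀ g x y : G, dist (g * x) (g * y) = dist x y)
    {x k : G} {r S : ℝ} (hk : dist 1 k ≤ S) (hxk : x * k ∈ ball (1 : G) r) :
    x ∈ ball (1 : G) (r + S) := by
  rw [mem_ball] at hxk ⊢
  calc dist x 1 ≤ dist x (x * k) + dist (x * k) 1 := dist_triangle _ _ _
    _ < S + r := by rw [dist_self_mul_of_left_invariant hinv]; linarith
    _ = r + S := add_comm _ _

end LeftInvariantMetric

section RightAverage

variable {G : Type*} [Group G] [MeasurableSpace G] {K : Subgroup G} {β : Measure K} {a : G → ℝ}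

theorem integral_mul_mul_eq_integral_mul [MeasurableMul K] [β.IsMulLeftInvariant] (x : G) {k : G}
    (hk : k ∈ K) : ∫ k', a (x * k * k') ∂β = ∫ k', a (x * k') ∂β := by
  simpa only [Subgroup.coe_mul, mul_assoc] using
    integral_mul_left_eq_self (μ := β) (fun k' : K => a (x * k')) ⟨k, hk⟩

theorem abs_integral_mul_le [IsProbabilityMeasure β] {M : ℝ} (hbound : ∀ y, |a y| ≤ M) (x : G) :
    |∫ k : K, a (x * k) ∂β| ≤ M := by
  simpa using norm_integral_le_of_norm_le_const (μ := β)
    (Filter.Eventually.of_forall fun k : K => (Real.norm_eq_abs _).trans_le (hbound (x * k)))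

variable [MetricSpace G]

theorem integral_mul_eq_zero_of_notMem_ball (hinv : ∀ g x y : G, dist (g * x) (g * y) = dist x y)
    {r S : ℝ} (hsupp : ∀ y, y ∉ ball (1 : G) r → a y = 0) (hS : ∀ k ∈ K, dist 1 k ≤ S) {x : G}
    (hx : x ∉ ball (1 : G) (r + S)) : ∫ k : K, a (x * k) ∂β = 0 := by
  have hzero : ∀ k : K, a (x * k) = 0 := fun k =>
    hsupp _ fun hxk => hx (mem_ball_of_mul_mem_ball hinv (hS k k.2) hxk)
  simp [hzero]

variable [IsTopologicalGroup G] [ProperSpace G] [BorelSpace G]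

theorem integrable_comp_mul_of_bounded (hinv : ∀ g x y : G, dist (g * x) (g * y) = dist x y)
    (ν : Measure G) [IsFiniteMeasureOnCompacts ν] [IsFiniteMeasure β] (ha : Measurable a)
    {r S M : ℝ} (hsupp : ∀ y, y ∉ ball (1 : G) r → a y = 0) (hbound : ∀ y, |a y| ≤ M)
    (hS : ∀ k ∈ K, dist 1 k ≤ S) :
    Integrable (fun p : G × K => a (p.1 * p.2)) (ν.prod β) := by
  have hsupport : Function.support (fun p : G × K => a (p.1 * p.2)) ⊆
      ball (1 : G) (r + S) ×ˢ Set.univ := fun p hp =>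
    ⟨mem_ball_of_mul_mem_ball hinv (hS p.2 p.2.2) (not_imp_comm.1 (hsupp _) hp), trivial⟩
  have hfinite : ν.prod β (ball (1 : G) (r + S) ×ˢ Set.univ) ≠ ∞ := by
    rw [prod_prod]
    exact ENNReal.mul_ne_top measure_ball_lt_top.ne (measure_ne_top β _)
  have hmeas : Measurable fun p : G × K => a (p.1 * p.2) :=
    ha.comp (measurable_fst.mul (measurable_subtype_coe.comp measurable_snd))
  exact (integrableOn_iff_integrable_of_support_subset hsupport).1
    (integrableOn_of_bounded hfinite hmeas.aestronglyMeasurable (M := M)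
      (Filter.Eventually.of_forall fun p => (Real.norm_eq_abs _).trans_le (hbound _)))

theorem integral_integral_mul_eq_zero (hinv : ∀ g x y : G, dist (g * x) (g * y) = dist x y)
    (ν : Measure G) [ν.IsHaarMeasure] [IsFiniteMeasure β] (ha : Measurable a)
    {r S M : ℝ} (hsupp : ∀ y, y ∉ ball (1 : G) r → a y = 0) (hbound : ∀ y, |a y| ≤ M)
    (hS : ∀ k ∈ K, dist 1 k ≤ S) (hcancel : ∫ y, a y ∂ν = 0) :
    ∫ x, ∫ k : K, a (x * k) ∂β ∂ν = 0 := by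
  rw [integral_integral_swap (integrable_comp_mul_of_bounded hinv ν ha hsupp hbound hS)]
  simp only [integral_comp_mul_right_eq_zero ν hcancel, integral_zero]

end RightAverage

theorem averaged_atom_is_K_invariant_atom_general
    {G : Type*} [Group G] [MetricSpace G] [IsTopologicalGroup G]
    [ProperSpace G] [MeasurableSpace G] [BorelSpace G]
    (hinvmetric : ∀ g x y : G, dist (g * x) (g * y) = dist x y)
    (ν : Measure G) [ν.IsHaarMeasure]
    (K : Subgroup G) (hK : IsCompact (K : Set G))
    (β : Measure K) [IsProbabilityMeasure β]
    (hβright : ∀ (k₀ : K) (g : K → ℝ), ∫ k, g (k * k₀) ∂β = ∫ k, g k ∂β)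
    (a : G → ℝ) (hameas : Measurable a)
    (rB : ℝ)
    (hsupp : ∀ y, y ∉ ball (1 : G) rB → a y = 0)
    (hbound : ∀ y, |a y| ≤ ((ν (ball (1 : G) rB)).toReal)⁻¹)
    (hcancel : ∫ y, a y ∂ν = 0)
    (r' : ℝ)
    (hr' : r' = rB + sSup ((fun k : G => dist (1 : G) k) '' (K : Set G)))
    (c : ℝ)
    (hc : c = (ν (ball (1 : G) rB)).toReal / (ν (ball (1 : G) r')).toReal) :
    (∀ (x : G), ∀ k ∈ K, (c * ∫ k' : K, a (x * k * k') ∂β) =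
        c * ∫ k' : K, a (x * k') ∂β) ∧
    (∀ x, x ∉ ball (1 : G) r' → (c * ∫ k' : K, a (x * k') ∂β) = 0) ∧
    (∀ x, |c * ∫ k' : K, a (x * k') ∂β| ≤ ((ν (ball (1 : G) r')).toReal)⁻¹) ∧
    ∫ x, (c * ∫ k' : K, a (x * k') ∂β) ∂ν = 0 := by
  have : CompactSpace K := isCompact_iff_compactSpace.mp hK
  have : β.IsMulRightInvariant := isMulRightInvariant_of_integral_comp_mul_right β hβright
  have : β.IsMulLeftInvariant := isMulLeftInvariant_of_isProbabilityMeasure β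
  have hdist : ∀ k ∈ K, dist 1 k ≤ sSup ((fun k : G => dist (1 : G) k) '' (K : Set G)) :=
    fun k hk => le_csSup (hK.image (continuous_const.dist continuous_id)).bddAbove ⟨k, hk, rfl⟩
  have hc0 : 0 ≤ c := hc ▸ by positivity
  subst hr'
  refine ⟨fun x k hk => by rw [integral_mul_mul_eq_integral_mul x hk],
    fun x hx => by rw [integral_mul_eq_zero_of_notMem_ball hinvmetric hsupp hdist hx, mul_zero],
    fun x => ?_,
    by rw [integral_const_mul,
      integral_integral_mul_eq_zero hinvmetric ν hameas hsupp hbound hdist hcancel, mul_zero]⟩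
  calc |c * ∫ k : K, a (x * k) ∂β| = c * |∫ k : K, a (x * k) ∂β| := by
        rw [abs_mul, abs_of_nonneg hc0]
    _ ≤ c * ((ν (ball (1 : G) rB)).toReal)⁻¹ :=
        mul_le_mul_of_nonneg_left (abs_integral_mul_le hbound x) hc0
    _ ≤ _ := hc ▸ div_mul_inv_le_inv ENNReal.toReal_nonneg

/-- averaging a `(1,∞)`-atom `a` supported in `B(e, r_B)` over
the compact subgroup `K` (with normalized Haar measure `β`), and multiplying by
`c = ν(B(e,r_B))/ν(B(e,r'_B))` where `r'_B = r_B + dist(e,K)` (the distance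
measured via `ρ`, i.e. the largest distance from `e` to a point of `K`),
produces a right-`K`-invariant `(1,∞)`-atom `a'` supported in `B(e, r'_B)` with
`‖a'‖_∞ ≤ 1/ν(B(e,r'_B))` and `∫_G a' dν = 0`. -/
theorem averaged_atom_is_K_invariant_atom
    {G : Type*} [Group G] [MetricSpace G] [IsTopologicalGroup G]
    [LocallyCompactSpace G] [ProperSpace G] [MeasurableSpace G] [BorelSpace G]
    (hinvmetric : ∀ g x y : G, dist (g * x) (g * y) = dist x y)
    (ν : Measure G) [ν.IsHaarMeasure]
    (K : Subgroup G) (hK : IsCompact (K : Set G))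
    (β : Measure K) [IsProbabilityMeasure β]
    (hβright : ∀ (k₀ : K) (g : K → ℝ), ∫ k, g (k * k₀) ∂β = ∫ k, g k ∂β)
    (a : G → ℝ) (hameas : Measurable a) (haint : Integrable a ν)
    (rB : ℝ) (hrB : 0 < rB)
    (hsupp : ∀ y, y ∉ ball (1 : G) rB → a y = 0)
    (hbound : ∀ y, |a y| ≤ ((ν (ball (1 : G) rB)).toReal)⁻¹)
    (hcancel : ∫ y, a y ∂ν = 0)
    (r' : ℝ)
    (hr' : r' = rB + sSup ((fun k : G => dist (1 : G) k) '' (K : Set G)))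
    (c : ℝ)
    (hc : c = (ν (ball (1 : G) rB)).toReal / (ν (ball (1 : G) r')).toReal) :
    (∀ (x : G), ∀ k ∈ K, (c * ∫ k' : K, a (x * k * k') ∂β) =
        c * ∫ k' : K, a (x * k') ∂β) ∧
    (∀ x, x ∉ ball (1 : G) r' → (c * ∫ k' : K, a (x * k') ∂β) = 0) ∧
    (∀ x, |c * ∫ k' : K, a (x * k') ∂β| ≤ ((ν (ball (1 : G) r')).toReal)⁻¹) ∧
    ∫ x, (c * ∫ k' : K, a (x * k') ∂β) ∂ν = 0 :=
  averaged_atom_is_K_invariant_atom_general hinvmetric ν K hK β hβright a hameas rB hsupp hbound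
    hcancel r' hr' c hc
end

section
/- Under the assumptions of the Hausdorff boundedness theorem on L^p(G/K), the discrete Hausdorff operator H f(ẋ) = Σ_{j=0}^∞ Φ(j) f(Ȧ(j)(ẋ)) satisfies ‖H‖_{L(L^p(G/K))} ≤ Σ_{j=0}^∞ |Φ(j)| (mod A(j))^{-1/p}, provided the right-hand side is finite. -/
/-!
Each `Ȧ(j)` is induced by `A(j)`, which rescales `ν` by `mod A(j)`; pushing forward
to `G/K` shows that `Ȧ(j)` rescales `λ` by `(mod A(j))⁻¹`, so the `j`-th term of the operator
has `L^p` norm at most `|Φ(j)| (mod A(j))^{-1/p} ‖f‖_p`. Minkowski's inequality for countable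
sums, obtained from the finite one by Fatou's lemma along the partial sums, adds these up.
-/

open MeasureTheory ENNReal NNReal

open Filter Topology in
theorem MeasureTheory.eLpNorm_tsum_le {α E : Type*} [MeasurableSpace α] {μ : Measure α}
    [NormedAddCommGroup E] [CompleteSpace E] {p : ℝ≥0∞} (hp : 1 ≤ p) {f : ℕ → α → E}
    (hf : ∀ j, AEStronglyMeasurable (f j) μ) :
    eLpNorm (fun x => ∑' j, f j x) p μ ≤ ∑' j, eLpNorm (f j) p μ := by
  by_cases hfin : ∑' j, eLpNorm (f j) p μ = ∞
  · exact hfin ▸ le_top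
  -- a finite bound forces a.e. absolute convergence, so the partial sums converge a.e. to the sum
  have hlim : ∀ᵐ x ∂μ, Tendsto (fun n => (∑ j ∈ Finset.range n, f j) x) atTop
      (𝓝 (∑' j, f j x)) := by
    filter_upwards [summable_norm_of_tsum_eLpNorm_ne_top hp hf hfin] with x hx
    simpa only [Finset.sum_apply] using hx.of_norm.hasSum.tendsto_sum_nat
  calc eLpNorm (fun x => ∑' j, f j x) p μ
      ≤ liminf (fun n => eLpNorm (∑ j ∈ Finset.range n, f j) p μ) atTop :=
        Lp.eLpNorm_lim_le_liminf_eLpNorm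
          (fun n => Finset.aestronglyMeasurable_sum _ fun j _ => hf j) _ hlim
    _ ≤ liminf (fun n => ∑ j ∈ Finset.range n, eLpNorm (f j) p μ) atTop :=
        liminf_le_liminf (Eventually.of_forall fun n => eLpNorm_sum_le (fun j _ => hf j) hp)
    _ = ∑' j, eLpNorm (f j) p μ := ENNReal.tsum_eq_liminf_sum_nat.symm

theorem MeasureTheory.Measure.map_eq_inv_smul_of_measure_image {α β : Type*} [MeasurableSpace α]
    [MeasurableSpace β] {μ : Measure α} {ν : Measure β} {f : α → β} (hf : Measurable f)
    (hsurj : Function.Surjective f) {c : ℝ≥0∞} (hc₀ : c ≠ 0) (hc : c ≠ ∞)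
    (himage : ∀ s, MeasurableSet s → ν (f '' s) = c * μ s) :
    μ.map f = c⁻¹ • ν := by
  ext s hs
  have hpre := himage _ (hf hs)
  rw [hsurj.image_preimage] at hpre
  rw [Measure.map_apply hf hs, Measure.smul_apply, smul_eq_mul, hpre, ← mul_assoc,
    ENNReal.inv_mul_cancel hc₀ hc, one_mul]

theorem MeasureTheory.Measure.map_map_eq_smul_of_semiconj {α β : Type*} [MeasurableSpace α]
    [MeasurableSpace β] {μ : Measure α} {π : α → β} {A : α → α} {B : β → β} (hπ : Measurable π)
    (hA : Measurable A) (hB : Measurable B) (hsemi : Function.Semiconj π A B) {c : ℝ≥0∞}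
    (hmap : μ.map A = c • μ) :
    (μ.map π).map B = c • μ.map π := by
  rw [Measure.map_map hB hπ, ← hsemi.comp_eq, ← Measure.map_map hπ hA, hmap, Measure.map_smul]

theorem MeasureTheory.eLpNorm_comp_of_map_eq_smul {α ε : Type*} [MeasurableSpace α]
    [TopologicalSpace ε] [ContinuousENorm ε] {μ : Measure α} {T : α → α} (hT : Measurable T)
    {c : ℝ≥0∞} (hc : c ≠ 0) (hmap : μ.map T = c • μ) {f : α → ε}
    (hf : AEStronglyMeasurable f μ) (p : ℝ≥0∞) :
    eLpNorm (f ∘ T) p μ = c ^ (1 / p).toReal * eLpNorm f p μ := by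
  rw [← eLpNorm_map_measure (hmap ▸ hf.smul_measure c) hT.aemeasurable, hmap,
    eLpNorm_smul_measure_of_ne_zero hc, smul_eq_mul]

theorem MeasureTheory.eLpNorm_tsum_smul_comp_le {α 𝕜 E : Type*} [MeasurableSpace α]
    {μ : Measure α} [NormedRing 𝕜] [NormedAddCommGroup E] [CompleteSpace E]
    [MulActionWithZero 𝕜 E] [IsBoundedSMul 𝕜 E] {p : ℝ≥0∞} (hp : 1 ≤ p) {T : ℕ → α → α}
    {c : ℕ → ℝ≥0∞} (hT : ∀ j, Measurable (T j)) (hc : ∀ j, c j ≠ 0)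
    (hmap : ∀ j, μ.map (T j) = c j • μ)
    (Φ : ℕ → 𝕜) {f : α → E} (hf : AEStronglyMeasurable f μ) :
    eLpNorm (fun x => ∑' j, Φ j • f (T j x)) p μ ≤
      (∑' j, ‖Φ j‖ₑ * c j ^ (1 / p).toReal) * eLpNorm f p μ := by
  have hqmp (j : ℕ) : Measure.QuasiMeasurePreserving (T j) μ μ :=
    ⟨hT j, (hmap j).symm ▸ Measure.smul_absolutelyContinuous⟩
  calc eLpNorm (fun x => ∑' j, Φ j • f (T j x)) p μ
      ≤ ∑' j, eLpNorm (Φ j • (f ∘ T j)) p μ :=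
        eLpNorm_tsum_le hp fun j => (hf.comp_quasiMeasurePreserving (hqmp j)).const_smul _
    _ ≤ ∑' j, ‖Φ j‖ₑ * c j ^ (1 / p).toReal * eLpNorm f p μ := by
        gcongr with j
        rw [mul_assoc, ← eLpNorm_comp_of_map_eq_smul (hT j) (hc j) (hmap j) hf]
        exact eLpNorm_const_smul_le
    _ = _ := ENNReal.tsum_mul_right

theorem discrete_hausdorff_bounded_Lp_quotient_general
    {G : Type*} [Group G] [TopologicalSpace G]
    [MeasurableSpace G] [BorelSpace G]
    (ν : Measure G)
    (K : Subgroup G)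
    (lam : Measure (G ⧸ K))
    (hlam : ν.map (QuotientGroup.mk : G → G ⧸ K) = lam)
    (A : ℕ → G ≃ₜ G)
    (Adot : ℕ → G ⧸ K → G ⧸ K)
    (hAdot : ∀ j (x : G), Adot j (QuotientGroup.mk x) = QuotientGroup.mk (A j x))
    (hAdotmeas : ∀ j, Measurable (Adot j))
    (modA : ℕ → ℝ) (hmodpos : ∀ j, 0 < modA j)
    (hmod : ∀ j, ∀ s : Set G, MeasurableSet s →
      ν ((A j : G → G) '' s) = ENNReal.ofReal (modA j) * ν s)
    (Φ : ℕ → ℝ) (p : ℝ≥0) (hp : 1 ≤ p)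
    (hfin : Summable (fun j => |Φ j| * (modA j) ^ (-(1 / (p : ℝ))))) :
    ∀ f : G ⧸ K → ℝ, MemLp f p lam →
      eLpNorm (fun x => ∑' j, Φ j * f (Adot j x)) p lam ≤
        ENNReal.ofReal (∑' j, |Φ j| * (modA j) ^ (-(1 / (p : ℝ)))) *
          eLpNorm f p lam := by
  intro f hf
  have hmapA (j : ℕ) : ν.map (A j) = (ENNReal.ofReal (modA j))⁻¹ • ν :=
    Measure.map_eq_inv_smul_of_measure_image (A j).measurable (A j).surjective
      (ENNReal.ofReal_pos.2 (hmodpos j)).ne' ENNReal.ofReal_ne_top (hmod j)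
  have hmap (j : ℕ) : lam.map (Adot j) = (ENNReal.ofReal (modA j))⁻¹ • lam :=
    hlam ▸ Measure.map_map_eq_smul_of_semiconj QuotientGroup.measurable_coe (A j).measurable
      (hAdotmeas j) (fun x => (hAdot j x).symm) (hmapA j)
  have hweight (j : ℕ) : ‖Φ j‖ₑ * (ENNReal.ofReal (modA j))⁻¹ ^ (1 / (p : ℝ≥0∞)).toReal =
      ENNReal.ofReal (|Φ j| * modA j ^ (-(1 / (p : ℝ)))) := by
    rw [ENNReal.inv_rpow, ← ENNReal.rpow_neg, ENNReal.ofReal_rpow_of_pos (hmodpos j),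
      Real.enorm_eq_ofReal_abs, ← ENNReal.ofReal_mul (abs_nonneg _)]
    simp only [one_div, ENNReal.toReal_inv, ENNReal.coe_toReal]
  have hbound := eLpNorm_tsum_smul_comp_le (ENNReal.one_le_coe_iff.2 hp) hAdotmeas
    (fun j => ENNReal.inv_ne_zero.2 ENNReal.ofReal_ne_top) hmap Φ hf.1
  rwa [ENNReal.ofReal_tsum_of_nonneg
    (fun j => mul_nonneg (abs_nonneg _) (Real.rpow_nonneg (hmodpos j).le _)) hfin,
    ← tsum_congr hweight]

/-- Corollary 1: the discrete Hausdorff operator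
`Hf(ẋ) = Σ_j Φ(j) f(Ȧ(j)(ẋ))` is bounded on `L^p(G/K)` with norm at most
`Σ_j |Φ(j)| (mod A(j))^{-1/p}`, whenever this sum is finite. -/
theorem discrete_hausdorff_bounded_Lp_quotient
    {G : Type*} [Group G] [TopologicalSpace G] [IsTopologicalGroup G]
    [LocallyCompactSpace G] [MeasurableSpace G] [BorelSpace G]
    (ν : Measure G) [ν.IsHaarMeasure]
    (K : Subgroup G) (hK : IsCompact (K : Set G))
    (lam : Measure (G ⧸ K))
    (hlam : ν.map (QuotientGroup.mk : G → G ⧸ K) = lam)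
    (A : ℕ → G ≃ₜ G)
    (hAhom : ∀ j, ∀ x y : G, A j (x * y) = A j x * A j y)
    (hAK : ∀ j, (A j : G → G) '' (K : Set G) = (K : Set G))
    (Adot : ℕ → G ⧸ K → G ⧸ K)
    (hAdot : ∀ j (x : G), Adot j (QuotientGroup.mk x) = QuotientGroup.mk (A j x))
    (hAdotmeas : ∀ j, Measurable (Adot j))
    (modA : ℕ → ℝ) (hmodpos : ∀ j, 0 < modA j)
    (hmod : ∀ j, ∀ s : Set G, MeasurableSet s →
      ν ((A j : G → G) '' s) = ENNReal.ofReal (modA j) * ν s)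
    (Φ : ℕ → ℝ) (p : ℝ≥0) (hp : 1 ≤ p)
    (hfin : Summable (fun j => |Φ j| * (modA j) ^ (-(1 / (p : ℝ))))) :
    ∀ f : G ⧸ K → ℝ, MemLp f p lam →
      eLpNorm (fun x => ∑' j, Φ j * f (Adot j x)) p lam ≤
        ENNReal.ofReal (∑' j, |Φ j| * (modA j) ^ (-(1 / (p : ℝ)))) *
          eLpNorm f p lam :=
  discrete_hausdorff_bounded_Lp_quotient_general ν K lam hlam A Adot hAdot hAdotmeas modA hmodpos
    hmod Φ p hp hfin
end
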